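/- arXiv:2403.05077 — 2 statements merged into one kernel-verified Lean document; each statement's English description precedes it below -/
import Mathlib

section
/- Let θ₁,…,θ_k > 0, let (a_j^{(l)}) be nonnegative integers with Σ_{l,j} j·a_j^{(l)} = n, and let η_j(θ_l) be independent Poisson variables with means θ_l/j. Then the refined Ewens probability (n!/(θ₁+…+θ_k)_n)·Π_{l,j}(θ_l/j)^{a_j^{(l)}}/(a_j^{(l)}!) equals the conditional probability P( η_j(θ_l) = a_j^{(l)} for all j ≤ n, l ≤ k | Σ_{l=1}^k Σ_{j=1}^n j·η_j(θ_l) = n ). -/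
/-!
With `x (l, j) = θ l / (j + 1)`, independence gives `ℙ (η = b) = e^{-∑ x} ∏ x ^ b / b!`, so the
conditional probability is `∏ x ^ a / a!` divided by `F n`, where `F m` sums `∏ x ^ b / b!` over
all configurations `b` of weight `∑ (j + 1) b (l, j) = m`. Counting the parts of each size,
`m F m = ∑ l, ∑ j, θ l F (m - j - 1) = Θ ∑_{i < m} F i` with `Θ = ∑ l, θ l`, and `(Θ)_m / m!`
satisfies the same recursion, since `(Θ)_{m+1} = (Θ)_m (Θ + m)`; hence `F n = (Θ)_n / n!`.
-/

open Finset MeasureTheory ProbabilityTheory Nat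

theorem update_succ_update_pred {ι : Type*} [DecidableEq ι] {b : ι → ℕ} {i : ι}
    (hb : b i ≠ 0) :
    Function.update (Function.update b i (b i - 1)) i (Function.update b i (b i - 1) i + 1) =
      b := by
  simp [Nat.sub_add_cancel (Nat.pos_of_ne_zero hb)]

section WeightedConfigs

variable {ι K : Type*} [Fintype ι] [Field K] {s : ι → ℕ}

/-- The Poisson probability of `b` without its factor `exp (-∑ i, x i)`. -/
def poissonWeight (x : ι → K) (b : ι → ℕ) : K :=
  ∏ i, x i ^ b i / (b i)!

theorem mul_le_of_sum_mul_eq {b : ι → ℕ} {m : ℕ} (h : ∑ j, s j * b j = m) (i : ι) :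
    s i * b i ≤ m :=
  h ▸ single_le_sum (fun j _ => Nat.zero_le (s j * b j)) (mem_univ i)

variable [DecidableEq ι] [CharZero K]

variable (s) in
/-- The vectors of multiplicities `b i` of parts of size `s i` with total size `m`; the bound
`b i ≤ m` only makes the set finite (see `mem_weightedConfigs`). -/
def weightedConfigs (m : ℕ) : Finset (ι → ℕ) :=
  {b ∈ Fintype.piFinset fun _ => range (m + 1) | ∑ i, s i * b i = m}

theorem mem_weightedConfigs (hs : ∀ i, 0 < s i) {m : ℕ} {b : ι → ℕ} :
    b ∈ weightedConfigs s m ↔ ∑ i, s i * b i = m := by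
  refine ⟨fun h => (mem_filter.1 h).2, fun h => mem_filter.2 ⟨?_, h⟩⟩
  refine Fintype.mem_piFinset.2 fun i => mem_range.2 ?_
  have := mul_le_of_sum_mul_eq h i
  have : b i ≤ s i * b i := Nat.le_mul_of_pos_left _ (hs i)
  omega

theorem weightedConfigs_zero (hs : ∀ i, 0 < s i) : weightedConfigs s 0 = {0} := by
  ext b
  simp [mem_weightedConfigs hs, sum_eq_zero_iff, (hs _).ne', funext_iff]

theorem sum_mul_update_succ (b : ι → ℕ) (i : ι) :
    ∑ j, s j * Function.update b i (b i + 1) j = ∑ j, s j * b j + s i := by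
  simp only [Function.apply_update (fun j v => s j * v), sum_update_of_mem (mem_univ i),
    sum_eq_add_sum_sdiff_singleton_of_mem (mem_univ i) (fun j => s j * b j)]
  ring

theorem mul_poissonWeight_update_succ (x : ι → K) (b : ι → ℕ) (i : ι) :
    (b i + 1) * poissonWeight x (Function.update b i (b i + 1)) = x i * poissonWeight x b := by
  simp only [poissonWeight, Function.apply_update (fun j v => x j ^ v / (v ! : K)),
    prod_update_of_mem (mem_univ i),
    prod_eq_mul_prod_sdiff_singleton_of_mem (mem_univ i) (fun j => x j ^ b j / ((b j)! : K))]
  rw [factorial_succ, pow_succ]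
  push_cast
  field_simp

/-- Removing one part of size `s i` is a bijection from the configurations of weight `m` with
`b i ≠ 0` onto those of weight `m - s i`. -/
theorem sum_weightedConfigs_natCast_mul_poissonWeight (hs : ∀ i, 0 < s i) (x : ι → K) (m : ℕ)
    (i : ι) :
    ∑ b ∈ weightedConfigs s m, (b i : K) * poissonWeight x b =
      if s i ≤ m then x i * ∑ c ∈ weightedConfigs s (m - s i), poissonWeight x c else 0 := by
  split_ifs with hsi
  · rw [mul_sum, ← sum_filter_of_ne (p := fun b => b i ≠ 0) fun b _ hb h0 => by simp [h0] at hb]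
    symm
    refine sum_nbij' (fun c => Function.update c i (c i + 1))
      (fun b => Function.update b i (b i - 1)) (fun c hc => ?_) (fun b hb => ?_)
      (fun c _ => by simp) (fun b hb => update_succ_update_pred (mem_filter.1 hb).2)
      (fun c _ => by simpa using (mul_poissonWeight_update_succ x c i).symm)
    · rw [mem_filter, mem_weightedConfigs hs, sum_mul_update_succ, (mem_weightedConfigs hs).1 hc]
      simp [hsi]
    · rw [mem_filter, mem_weightedConfigs hs] at hb
      have hweight := sum_mul_update_succ (s := s) (Function.update b i (b i - 1)) i
      rw [update_succ_update_pred hb.2, hb.1] at hweight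
      rw [mem_weightedConfigs hs]
      omega
  · refine sum_eq_zero fun b hb => ?_
    have hbi : b i = 0 := by
      by_contra h
      have := mul_le_of_sum_mul_eq ((mem_weightedConfigs hs).1 hb) i
      have : s i ≤ s i * b i := Nat.le_mul_of_pos_right _ (Nat.pos_of_ne_zero h)
      omega
    simp [hbi]

theorem natCast_mul_sum_weightedConfigs (hs : ∀ i, 0 < s i) (x : ι → K) (m : ℕ) :
    m * ∑ b ∈ weightedConfigs s m, poissonWeight x b =
      ∑ i, if s i ≤ m then s i * x i * ∑ c ∈ weightedConfigs s (m - s i), poissonWeight x c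
        else 0 := by
  calc (m : K) * ∑ b ∈ weightedConfigs s m, poissonWeight x b
      = ∑ b ∈ weightedConfigs s m, ∑ i, (s i : K) * (b i * poissonWeight x b) := by
        rw [mul_sum]
        refine sum_congr rfl fun b hb => ?_
        have hw : (m : K) = ∑ i, (s i : K) * b i := by
          exact_mod_cast ((mem_weightedConfigs hs).1 hb).symm
        rw [hw, sum_mul]
        exact sum_congr rfl fun i _ => mul_assoc _ _ _
    _ = ∑ i, (s i : K) * ∑ b ∈ weightedConfigs s m, (b i : K) * poissonWeight x b := by
        rw [sum_comm]
        simp_rw [mul_sum]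
    _ = _ := by
        refine sum_congr rfl fun i _ => ?_
        rw [sum_weightedConfigs_natCast_mul_poissonWeight hs]
        split_ifs <;> ring

end WeightedConfigs

theorem natCast_mul_ascPochhammer_eval_div_factorial {K : Type*} [Field K] [CharZero K]
    (t : K) (m : ℕ) :
    m * ((ascPochhammer K m).eval t / m !) =
      t * ∑ i ∈ range m, (ascPochhammer K i).eval t / i ! := by
  induction m with
  | zero => simp
  | succ m ih =>
    rw [sum_range_succ, mul_add, ← ih, ascPochhammer_succ_eval, factorial_succ]
    push_cast
    field_simp
    ring

theorem sum_fin_ite_succ_le_eq_sum_range {M : Type*} [AddCommMonoid M] (f : ℕ → M) {m n : ℕ}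
    (hm : m ≤ n) :
    ∑ j : Fin n, (if (j : ℕ) + 1 ≤ m then f (m - ((j : ℕ) + 1)) else 0) =
      ∑ i ∈ range m, f i := by
  rw [Fin.sum_univ_eq_sum_range (fun j => if j + 1 ≤ m then f (m - (j + 1)) else 0),
    ← sum_filter, ← sum_range_reflect]
  have : {j ∈ range n | j + 1 ≤ m} = range m := by
    ext j; simp only [mem_filter, mem_range]; omega
  rw [this]
  exact sum_congr rfl fun j _ => by rw [Nat.sub_sub, add_comm 1]

theorem sum_weightedConfigs_cycleType_poissonWeight {K : Type*} [Field K] [CharZero K]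
    {k n m : ℕ} (θ : Fin k → K) (hm : m ≤ n) :
    ∑ b ∈ weightedConfigs (fun p : Fin k × Fin n => (p.2 : ℕ) + 1) m,
        poissonWeight (fun p => θ p.1 / ((p.2 : ℕ) + 1)) b =
      (ascPochhammer K m).eval (∑ l, θ l) / m ! := by
  induction m using Nat.strong_induction_on with
  | _ m ih =>
  rcases m with _ | m
  · simp [weightedConfigs_zero, poissonWeight]
  refine mul_left_cancel₀ (Nat.cast_ne_zero.2 m.succ_ne_zero : ((m + 1 : ℕ) : K) ≠ 0) ?_
  rw [natCast_mul_sum_weightedConfigs (fun _ => Nat.succ_pos _),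
    natCast_mul_ascPochhammer_eval_div_factorial, Fintype.sum_prod_type, sum_mul]
  refine sum_congr rfl fun l _ => ?_
  rw [← sum_fin_ite_succ_le_eq_sum_range _ hm, mul_sum]
  refine sum_congr rfl fun j _ => ?_
  split_ifs with hj
  · rw [ih _ (by omega) (by omega)]
    push_cast
    field_simp
  · rw [mul_zero]

section Poisson

variable {Ω ι : Type*} [MeasurableSpace Ω] [Fintype ι] {μ : Measure Ω} {η : ι → Ω → ℕ}

theorem toReal_measure_forall_eq_of_iIndepFun (hind : iIndepFun η μ) (x : ι → ℝ)
    (hpois : ∀ i p, (μ {ω | η i ω = p}).toReal = Real.exp (-x i) * x i ^ p / p !)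
    (b : ι → ℕ) :
    (μ {ω | ∀ i, η i ω = b i}).toReal = (∏ i, Real.exp (-x i)) * poissonWeight x b := by
  have hiInter : {ω | ∀ i, η i ω = b i} = ⋂ i, η i ⁻¹' {b i} := by
    ext ω
    simp
  rw [hiInter, hind.meas_iInter fun i => ⟨{b i}, measurableSet_singleton _, rfl⟩,
    ENNReal.toReal_prod, poissonWeight, ← prod_mul_distrib]
  exact prod_congr rfl fun i _ => by rw [← mul_div_assoc]; exact hpois i (b i)

theorem measure_sum_mul_eq_sum_weightedConfigs [DecidableEq ι] {s : ι → ℕ} (hs : ∀ i, 0 < s i)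
    (hmeas : ∀ i, Measurable (η i)) (m : ℕ) :
    μ {ω | ∑ i, s i * η i ω = m} = ∑ b ∈ weightedConfigs s m, μ {ω | ∀ i, η i ω = b i} := by
  have hunion : {ω | ∑ i, s i * η i ω = m} =
      ⋃ b ∈ weightedConfigs s m, {ω | ∀ i, η i ω = b i} := by
    ext ω
    simp [mem_weightedConfigs hs, ← funext_iff]
  rw [hunion, measure_biUnion_finset]
  · exact fun b _ b' _ hbb' => Set.disjoint_left.2 fun ω hb hb' =>
      hbb' (funext fun i => (hb i).symm.trans (hb' i))
  · exact fun b _ => by measurability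

end Poisson

theorem refined_esf_conditional_poisson_general
    {Ω : Type*} [MeasureSpace Ω] [IsProbabilityMeasure (ℙ : Measure Ω)]
    (k n : ℕ) (θ : Fin k → ℝ)
    (a : Fin k → Fin n → ℕ)
    (ha : ∑ l, ∑ j : Fin n, ((j : ℕ) + 1) * a l j = n)
    (η : Fin k → Fin n → Ω → ℕ) (hmeas : ∀ l j, Measurable (η l j))
    (hind : iIndepFun
      (fun p : Fin k × Fin n => η p.1 p.2) ℙ)
    (hpois : ∀ l (j : Fin n) (p : ℕ),
      (ℙ {ω | η l j ω = p}).toReal =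
        Real.exp (-(θ l / ((j : ℕ) + 1))) * (θ l / ((j : ℕ) + 1)) ^ p / (p !)) :
    (n ! : ℝ) / (ascPochhammer ℝ n).eval (∑ l, θ l) *
        ∏ l, ∏ j : Fin n, (θ l / ((j : ℕ) + 1)) ^ (a l j) / ((a l j)! : ℝ) =
      ((ℙ[|{ω | ∑ l, ∑ j : Fin n, ((j : ℕ) + 1) * η l j ω = n}])
        {ω | ∀ l j, η l j ω = a l j}).toReal := by
  have hs : ∀ p : Fin k × Fin n, 0 < (p.2 : ℕ) + 1 := fun _ => Nat.succ_pos _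
  have hB : {ω | ∑ l, ∑ j : Fin n, ((j : ℕ) + 1) * η l j ω = n} =
      {ω | ∑ p : Fin k × Fin n, ((p.2 : ℕ) + 1) * η p.1 p.2 ω = n} := by
    simp only [Fintype.sum_prod_type]
  have hA : {ω | ∀ l j, η l j ω = a l j} =
      {ω | ∀ p : Fin k × Fin n, η p.1 p.2 ω = a p.1 p.2} := by
    simp only [Prod.forall]
  have hAB : {ω | ∀ l j, η l j ω = a l j} ⊆
      {ω | ∑ l, ∑ j : Fin n, ((j : ℕ) + 1) * η l j ω = n} :=
    fun ω (hω : ∀ l j, η l j ω = a l j) => show _ = n by simp only [hω, ha]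
  rw [cond_apply (measurableSet_eq_fun (by fun_prop) measurable_const),
    Set.inter_eq_self_of_subset_right hAB, ENNReal.toReal_mul, ENNReal.toReal_inv, hA, hB,
    measure_sum_mul_eq_sum_weightedConfigs hs (fun p => hmeas p.1 p.2),
    ENNReal.toReal_sum fun _ _ => measure_ne_top _ _]
  simp only [toReal_measure_forall_eq_of_iIndepFun hind _ (fun p => hpois p.1 p.2), ← mul_sum]
  rw [sum_weightedConfigs_cycleType_poissonWeight θ le_rfl, mul_inv_rev, mul_assoc,
    inv_mul_cancel_left₀ (prod_ne_zero_iff.2 fun _ _ => (Real.exp_pos _).ne'), inv_div,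
    poissonWeight, Fintype.prod_prod_type]

/-- Conditional-Poisson representation of the refined Ewens sampling formula:
the refined Ewens probability of an allelic matrix `(a_j^{(l)})` with
`Σ_{l,j} j·a_j^{(l)} = n` equals the conditional probability that independent
Poisson variables `η_j(θ_l)` (means `θ_l/j`) equal `a_j^{(l)}` given that
`Σ_{l,j} j·η_j(θ_l) = n`. -/
theorem refined_esf_conditional_poisson
    {Ω : Type*} [MeasureSpace Ω] [IsProbabilityMeasure (ℙ : Measure Ω)]
    (k n : ℕ) (hn : 2 ≤ n) (θ : Fin k → ℝ) (hθ : ∀ i, 0 < θ i)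
    (a : Fin k → Fin n → ℕ)
    (ha : ∑ l, ∑ j : Fin n, ((j : ℕ) + 1) * a l j = n)
    (η : Fin k → Fin n → Ω → ℕ) (hmeas : ∀ l j, Measurable (η l j))
    (hind : iIndepFun
      (fun p : Fin k × Fin n => η p.1 p.2) ℙ)
    (hpois : ∀ l (j : Fin n) (p : ℕ),
      (ℙ {ω | η l j ω = p}).toReal =
        Real.exp (-(θ l / ((j : ℕ) + 1))) * (θ l / ((j : ℕ) + 1)) ^ p / (p !)) :
    (n ! : ℝ) / (ascPochhammer ℝ n).eval (∑ l, θ l) *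
        ∏ l, ∏ j : Fin n, (θ l / ((j : ℕ) + 1)) ^ (a l j) / ((a l j)! : ℝ) =
      ((ℙ[|{ω | ∑ l, ∑ j : Fin n, ((j : ℕ) + 1) * η l j ω = n}])
        {ω | ∀ l j, η l j ω = a l j}).toReal :=
  refined_esf_conditional_poisson_general k n θ a ha η hmeas hind hpois
end

section
/- Let θ₁,…,θ_k > 0 and let K_n^{(1)},…,K_n^{(k)} be the numbers of distinct alleles of each class in a random sample of size n governed by the refined Ewens sampling formula. Then P(K_n^{(1)} = p₁, …, K_n^{(k)} = p_k) = (n! θ₁^{p₁} ⋯ θ_k^{p_k}/(θ₁+…+θ_k)_n) · Σ_{n₁+…+n_k = n} ( [n₁ choose-cycles p₁] ⋯ [n_k choose-cycles p_k] / (n₁! ⋯ n_k!) ), where [m choose-cycles p] denotes the unsigned Stirling number of the first kind (number of permutations of m elements with p cycles). -/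
/-!
The refined Ewens weight of an allelic matrix is a product over the classes, so summing it
over the matrices with row sums `(n₁, …, n_k)` factorises into `∏ₗ θₗ ^ pₗ · W(nₗ, pₗ)`, where
`W(m, p) = Σ_λ 1 / z_λ` runs over the partitions `λ` of `m` into `p` parts and
`z_λ = ∏ j ^ a_j · a_j!` is the order of the centraliser of a permutation of cycle type `λ`.
Hence `m! · W(m, p)` should count the permutations of `m` points with `p` cycles. Both sides
satisfy the Stirling recurrence `s(m+1, p+1) = m · s(m, p+1) + s(m, p)`: for permutations, the new
point is either a fixed point or is inserted after one of the `m` old points in its cycle; for the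
weights, removing one part of size `i` from `λ` gives `m · W(m, p+1) = Σ_{i<m} W(i, p)`.
-/

open Finset Nat

/-- The number of cycles of a permutation of `Fin m`, counting fixed points. -/
def numCycles {m : ℕ} (s : Equiv.Perm (Fin m)) : ℕ :=
  s.cycleType.card + (m - s.support.card)

/-- The unsigned Stirling number of the first kind: the number of permutations of
`m` elements having exactly `p` cycles. -/
noncomputable def stirlingFirst (m p : ℕ) : ℕ :=
  Nat.card {s : Equiv.Perm (Fin m) // numCycles s = p}

namespace Equiv.Perm

variable {α β : Type*} [Fintype α] [DecidableEq α] [Fintype β] [DecidableEq β]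

def cycleCount (σ : Perm α) : ℕ := Multiset.card σ.partition.parts

theorem cycleCount_eq_card_cycleType_add (σ : Perm α) :
    σ.cycleCount = Multiset.card σ.cycleType + (Fintype.card α - #σ.support) := by
  simp [cycleCount, parts_partition]

theorem Disjoint.cycleCount_mul {σ τ : Perm α} (h : σ.Disjoint τ) :
    (σ * τ).cycleCount + Fintype.card α = σ.cycleCount + τ.cycleCount := by
  have hle : #σ.support + #τ.support ≤ Fintype.card α := h.card_support_mul ▸ card_le_univ _
  simp only [cycleCount_eq_card_cycleType_add, h.cycleType_mul, h.card_support_mul,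
    Multiset.card_add]
  omega

theorem IsCycle.cycleCount_swap_mul {c : Perm α} (hc : c.IsCycle) {x : α} (hx : c x ≠ x) :
    (swap x (c x) * c).cycleCount = c.cycleCount + 1 := by
  have hle : #c.support ≤ Fintype.card α := card_le_univ _
  by_cases hcc : c (c x) = x
  · have hswap := hc.eq_swap_of_apply_apply_eq_self hx hcc
    have h2 : #c.support = 2 := hswap ▸ card_support_swap hx.symm
    have h1 : swap x (c x) * c = 1 := mul_eq_one_iff_inv_eq.2 (by rw [swap_inv, ← hswap])
    simp only [h1, cycleCount_eq_card_cycleType_add, hc.cycleType, h2, cycleType_one,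
      support_one, Multiset.card_zero, Multiset.card_singleton, card_empty]
    omega
  · have hx' : x ∈ c.support := mem_support.2 hx
    have hsupp := support_swap_mul_eq c x hcc
    have hcard : #(swap x (c x) * c).support + 1 = #c.support := by
      rw [hsupp, card_sdiff_of_subset (singleton_subset_iff.2 hx'), card_singleton]
      have := card_pos.2 ⟨x, hx'⟩
      omega
    simp only [cycleCount_eq_card_cycleType_add, (hc.swap_mul hx hcc).cycleType, hc.cycleType,
      Multiset.card_singleton]
    omega

theorem cycleCount_swap_mul {f : Perm α} {x : α} (hx : f x ≠ x) :
    (swap x (f x) * f).cycleCount = f.cycleCount + 1 := by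
  -- only the cycle `c` of `x` changes; `f * c⁻¹` carries the other cycles
  set c := f.cycleOf x
  have hc : c ∈ f.cycleFactorsFinset := cycleOf_mem_cycleFactorsFinset_iff.2 (mem_support.2 hx)
  have hcx : c x = f x := cycleOf_apply_self f x
  have hdisj : (f * c⁻¹).Disjoint c := disjoint_mul_inv_of_mem_cycleFactorsFinset hc
  have hf : f = c * (f * c⁻¹) := by rw [hdisj.symm.commute.eq, inv_mul_cancel_right]
  have hdisj' : (f * c⁻¹).Disjoint (swap x (c x) * c) :=
    hdisj.mono le_rfl fun y hy => (mem_support_swap_mul_imp_mem_support_ne hy).1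
  have hcyc : c.IsCycle := isCycle_cycleOf f hx
  have key := hcyc.cycleCount_swap_mul (hcx ▸ hx)
  have h1 := hdisj.symm.cycleCount_mul
  have h2 := hdisj'.symm.cycleCount_mul
  rw [← hf] at h1
  rw [mul_assoc, ← hf, hcx] at h2
  rw [hcx] at key
  omega

theorem cycleCount_extendDomain {p : β → Prop} [DecidablePred p] (f : α ≃ Subtype p)
    (e : Perm α) :
    (e.extendDomain f).cycleCount + Fintype.card α = e.cycleCount + Fintype.card β := by
  have hα : #e.support ≤ Fintype.card α := card_le_univ _
  have hβ : Fintype.card α ≤ Fintype.card β :=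
    (Fintype.card_congr f).trans_le (Fintype.card_subtype_le p)
  simp only [cycleCount_eq_card_cycleType_add, cycleType_extendDomain,
    card_support_extend_domain]
  omega

theorem cycleCount_permCongr (f : α ≃ β) (e : Perm α) :
    (f.permCongr e).cycleCount = e.cycleCount := by
  have h : f.permCongr e = e.extendDomain (f.trans (subtypeUnivEquiv fun _ => trivial).symm) := by
    ext b
    rw [extendDomain_apply_subtype _ _ trivial]
    simp [permCongr_apply]
  have := cycleCount_extendDomain (f.trans (subtypeUnivEquiv fun _ => trivial).symm) e
  rw [← h, Fintype.card_congr f] at this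
  omega

theorem cycleCount_optionCongr (e : Perm α) :
    cycleCount (optionCongr e : Perm (Option α)) = e.cycleCount + 1 := by
  have h : optionCongr e = e.extendDomain (optionIsSomeEquiv α).symm := by
    refine Equiv.ext fun o => ?_
    rcases o with _ | a
    · rw [extendDomain_apply_not_subtype _ _ (by simp)]
      rfl
    · rw [extendDomain_apply_subtype e (optionIsSomeEquiv α).symm (rfl : (some a).isSome)]
      simp [optionIsSomeEquiv]
  have := cycleCount_extendDomain (optionIsSomeEquiv α).symm e
  rw [← h, Fintype.card_option] at this
  omega

theorem cycleCount_decomposeOption_symm (i : Option α) (e : Perm α) :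
    (decomposeOption.symm (i, e)).cycleCount = e.cycleCount + if i = none then 1 else 0 := by
  rcases i with _ | a
  · rw [decomposeOption_symm_apply, swap_self, ← one_def, one_mul, cycleCount_optionCongr,
      if_pos rfl]
  -- splitting `none` off its cycle recovers `optionCongr e`
  · have h := cycleCount_swap_mul (f := swap none (some a) * optionCongr e) (x := none) (by simp)
    have hnone : (swap none (some a) * optionCongr e) none = some a := by simp
    rw [hnone, swap_mul_self_mul, cycleCount_optionCongr] at h
    simp only [decomposeOption_symm_apply, reduceCtorEq, if_false]
    omega

theorem card_cycleCount_option (q : ℕ) :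
    Fintype.card {σ : Perm (Option α) // σ.cycleCount = q + 1} =
      Fintype.card {e : Perm α // e.cycleCount = q} +
        Fintype.card α * Fintype.card {e : Perm α // e.cycleCount = q + 1} := by
  simp only [Fintype.card_subtype, card_filter]
  rw [← decomposeOption.symm.sum_comp, Fintype.sum_prod_type, Fintype.sum_option]
  simp only [cycleCount_decomposeOption_symm]
  simp

theorem cycleCount_pos [Nonempty α] (σ : Perm α) : 0 < σ.cycleCount := by
  refine Multiset.card_pos.2 fun h => Fintype.card_ne_zero (α := α) ?_
  simpa [h] using σ.partition.parts_sum.symm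

theorem cycleCount_of_isEmpty [IsEmpty α] (σ : Perm α) : σ.cycleCount = 0 := by
  simp [cycleCount_eq_card_cycleType_add, Subsingleton.elim σ 1]

theorem card_cycleCount_eq_stirlingFirst (m p : ℕ) :
    Fintype.card {s : Perm (Fin m) // s.cycleCount = p} = Nat.stirlingFirst m p := by
  induction m generalizing p with
  | zero => rcases p with _ | p <;> simp [cycleCount_of_isEmpty, Nat.stirlingFirst]
  | succ m ih =>
    rcases p with _ | p
    · rw [Nat.stirlingFirst_succ_zero, Fintype.card_eq_zero_iff]
      exact ⟨fun s => (cycleCount_pos s.1).ne' s.2⟩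
    · have e : {s : Perm (Fin (m + 1)) // s.cycleCount = p + 1} ≃
          {σ : Perm (Option (Fin m)) // σ.cycleCount = p + 1} :=
        (finSuccEquiv m).permCongr.subtypeEquiv fun s => by rw [cycleCount_permCongr]
      rw [Fintype.card_congr e, card_cycleCount_option, Fintype.card_fin, ih, ih,
        Nat.stirlingFirst_succ_succ, add_comm]

end Equiv.Perm

theorem numCycles_eq_cycleCount {m : ℕ} (s : Equiv.Perm (Fin m)) :
    numCycles s = s.cycleCount := by
  rw [numCycles, Equiv.Perm.cycleCount_eq_card_cycleType_add, Fintype.card_fin]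

theorem stirlingFirst_eq_nat_stirlingFirst (m p : ℕ) :
    _root_.stirlingFirst m p = Nat.stirlingFirst m p := by
  simp_rw [_root_.stirlingFirst, numCycles_eq_cycleCount, Nat.card_eq_fintype_card,
    Equiv.Perm.card_cycleCount_eq_stirlingFirst]

theorem sum_mul_add_single {ι : Type*} [Fintype ι] [DecidableEq ι] (c a : ι → ℕ) (j : ι) :
    ∑ i, c i * (a + Pi.single j 1 : ι → ℕ) i = ∑ i, c i * a i + c j := by
  simp [mul_add, sum_add_distrib, Pi.single_apply]

-- `a j` is the number of parts of size `j + 1`; the bound `a j ≤ m` only makes the set finite.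
def allelicVectors (n m p : ℕ) : Finset (Fin n → ℕ) :=
  (Fintype.piFinset fun _ => range (m + 1)).filter
    fun a => ∑ j, (j.val + 1) * a j = m ∧ ∑ j, a j = p

noncomputable def cycleIndexWeight {n : ℕ} (a : Fin n → ℕ) : ℝ :=
  ∏ j, ((j.val + 1 : ℝ) ^ a j * (a j)!)⁻¹

noncomputable def cycleIndexSum (n m p : ℕ) : ℝ :=
  ∑ a ∈ allelicVectors n m p, cycleIndexWeight a

section CycleIndex

variable {n : ℕ}

theorem mul_le_of_sum_mul_eq_s14 {m : ℕ} {a : Fin n → ℕ} (h : ∑ j, (j.val + 1) * a j = m)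
    (j : Fin n) : (j.val + 1) * a j ≤ m :=
  h ▸ single_le_sum (f := fun i : Fin n => (i.val + 1) * a i) (fun _ _ => Nat.zero_le _)
    (mem_univ j)

theorem mem_allelicVectors {m p : ℕ} {a : Fin n → ℕ} :
    a ∈ allelicVectors n m p ↔ ∑ j, (j.val + 1) * a j = m ∧ ∑ j, a j = p :=
  mem_filter.trans <| and_iff_right_of_imp fun h => Fintype.mem_piFinset.2 fun j =>
    mem_range_succ_iff.2 <|
      (Nat.le_mul_of_pos_left _ j.val.succ_pos).trans (mul_le_of_sum_mul_eq_s14 h.1 j)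

theorem cycleIndexWeight_pos (a : Fin n → ℕ) : 0 < cycleIndexWeight a :=
  prod_pos fun _ _ => by positivity

theorem cycleIndexWeight_eq_mul_add_single (a : Fin n → ℕ) (j : Fin n) :
    cycleIndexWeight a =
      ((j.val + 1 : ℝ) * (a j + 1)) * cycleIndexWeight (a + Pi.single j 1) := by
  rw [cycleIndexWeight, cycleIndexWeight, Fintype.prod_eq_mul_prod_compl j,
    Fintype.prod_eq_mul_prod_compl j, ← mul_assoc]
  congr 1
  · simp only [Pi.add_apply, Pi.single_eq_same, pow_succ, factorial_succ]
    push_cast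
    field_simp
  · refine prod_congr rfl fun i hi => ?_
    rw [Pi.add_apply, Pi.single_eq_of_ne (by simpa using hi), add_zero]

theorem sum_mul_cycleIndexWeight_allelicVectors (j : Fin n) (m p : ℕ) :
    ∑ x ∈ allelicVectors n (m + (j.val + 1)) (p + 1),
        (j.val + 1 : ℝ) * x j * cycleIndexWeight x =
      ∑ y ∈ allelicVectors n m p, cycleIndexWeight y := by
  symm
  refine sum_bij_ne_zero (fun y _ _ => y + Pi.single j 1) (fun y hy _ => ?_)
    (fun _ _ _ _ _ _ h => add_right_cancel h) (fun x hxt hx0 => ?_) (fun y _ _ => ?_)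
  · obtain ⟨h1, h2⟩ := mem_allelicVectors.1 hy
    refine mem_allelicVectors.2 ⟨?_, ?_⟩
    · rw [sum_mul_add_single (fun i : Fin n => i.val + 1), h1]
    · simpa [← h2] using sum_mul_add_single 1 y j
  · have hxj : x j ≠ 0 := fun h => hx0 (by simp [h])
    have hx : x - Pi.single j 1 + Pi.single j 1 = x := by
      ext i
      rcases eq_or_ne i j with rfl | hi
      · simp only [Pi.add_apply, Pi.sub_apply, Pi.single_eq_same]
        omega
      · simp [hi]
    obtain ⟨h1, h2⟩ := mem_allelicVectors.1 hxt
    refine ⟨x - Pi.single j 1, mem_allelicVectors.2 ⟨?_, ?_⟩, ?_, hx⟩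
    · have := sum_mul_add_single (fun i : Fin n => i.val + 1) (x - Pi.single j 1) j
      rw [hx] at this
      omega
    · have := sum_mul_add_single 1 (x - Pi.single j 1) j
      simp only [hx, Pi.one_apply, one_mul] at this
      omega
    · exact (cycleIndexWeight_pos _).ne'
  · rw [cycleIndexWeight_eq_mul_add_single y j]
    simp

theorem sum_mul_cycleIndexWeight_allelicVectors_of_lt {m : ℕ} (j : Fin n) (hj : m < j.val + 1)
    (p : ℕ) :
    ∑ x ∈ allelicVectors n m p, (j.val + 1 : ℝ) * x j * cycleIndexWeight x = 0 := by
  refine sum_eq_zero fun x hx => ?_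
  have hxj : x j = 0 := by
    by_contra h
    have := mul_le_of_sum_mul_eq_s14 (mem_allelicVectors.1 hx).1 j
    have := Nat.le_mul_of_pos_right (j.val + 1) (Nat.pos_of_ne_zero h)
    omega
  simp [hxj]

theorem allelicVectors_zero_left (p : ℕ) : allelicVectors n 0 p = if p = 0 then {0} else ∅ := by
  ext a
  have ha : ∑ j, (j.val + 1) * a j = 0 ↔ a = 0 := by simp [sum_eq_zero_iff, funext_iff]
  rw [mem_allelicVectors, ha]
  split_ifs with hp
  · rw [mem_singleton, hp]
    exact and_iff_left_of_imp (by rintro rfl; simp)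
  · simp only [notMem_empty, iff_false, not_and]
    rintro rfl
    simpa using Ne.symm hp

theorem allelicVectors_succ_zero (m : ℕ) : allelicVectors n (m + 1) 0 = ∅ := by
  ext a
  have ha : ∑ j, a j = 0 ↔ a = 0 := by simp [sum_eq_zero_iff, funext_iff]
  simp only [mem_allelicVectors, ha, notMem_empty, iff_false, not_and]
  rintro h rfl
  simp at h

theorem mul_cycleIndexSum_succ {m : ℕ} (hm : m ≤ n) (p : ℕ) :
    m * cycleIndexSum n m (p + 1) = ∑ i ∈ range m, cycleIndexSum n i p := by
  have hsplit : ∀ x ∈ allelicVectors n m (p + 1),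
      (m : ℝ) * cycleIndexWeight x = ∑ j, (j.val + 1 : ℝ) * x j * cycleIndexWeight x := by
    intro x hx
    rw [← sum_mul, ← (mem_allelicVectors.1 hx).1]
    push_cast
    rfl
  have hterm : ∀ j : Fin n,
      ∑ x ∈ allelicVectors n m (p + 1), (j.val + 1 : ℝ) * x j * cycleIndexWeight x =
        if j.val < m then cycleIndexSum n (m - 1 - j.val) p else 0 := by
    intro j
    split_ifs with hj
    · obtain ⟨i, rfl⟩ : ∃ i, m = i + (j.val + 1) := ⟨m - (j.val + 1), by omega⟩
      rw [sum_mul_cycleIndexWeight_allelicVectors, cycleIndexSum]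
      congr 2
      omega
    · exact sum_mul_cycleIndexWeight_allelicVectors_of_lt j (by omega) _
  calc (m : ℝ) * cycleIndexSum n m (p + 1)
      = ∑ x ∈ allelicVectors n m (p + 1), ∑ j, (j.val + 1 : ℝ) * x j * cycleIndexWeight x := by
        rw [cycleIndexSum, mul_sum]
        exact sum_congr rfl hsplit
    _ = ∑ j ∈ range n, if j < m then cycleIndexSum n (m - 1 - j) p else 0 := by
        rw [sum_comm, ← Fin.sum_univ_eq_sum_range]
        exact sum_congr rfl fun j _ => hterm j
    _ = ∑ j ∈ range m, cycleIndexSum n (m - 1 - j) p := by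
        rw [← sum_subset (range_subset_range.2 hm) fun j _ hj => if_neg (by simpa using hj)]
        exact sum_congr rfl fun j hj => if_pos (mem_range.1 hj)
    _ = ∑ i ∈ range m, cycleIndexSum n i p := sum_range_reflect (cycleIndexSum n · p) m

theorem cycleIndexSum_mul_factorial {m : ℕ} (hm : m ≤ n) (p : ℕ) :
    cycleIndexSum n m p * m ! = Nat.stirlingFirst m p := by
  induction m generalizing p with
  | zero =>
    rw [cycleIndexSum, allelicVectors_zero_left]
    rcases p with _ | p <;> simp [Nat.stirlingFirst, cycleIndexWeight]
  | succ m ih =>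
    rcases p with _ | p
    · simp [cycleIndexSum, allelicVectors_succ_zero]
    · have hrec := mul_cycleIndexSum_succ hm p
      rw [sum_range_succ, ← mul_cycleIndexSum_succ (by omega) p] at hrec
      calc cycleIndexSum n (m + 1) (p + 1) * (m + 1)!
          = (m * cycleIndexSum n m (p + 1) + cycleIndexSum n m p) * m ! := by
            rw [← hrec, factorial_succ]
            push_cast
            ring
        _ = Nat.stirlingFirst (m + 1) (p + 1) := by
            rw [add_mul, mul_assoc, ih (by omega), ih (by omega), Nat.stirlingFirst_succ_succ]
            push_cast
            ring

theorem sum_prod_allelicVectors (θ : ℝ) {m : ℕ} (hm : m ≤ n) (p : ℕ) :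
    ∑ a ∈ allelicVectors n m p, ∏ j, (θ / (j.val + 1)) ^ a j / (a j)! =
      θ ^ p * Nat.stirlingFirst m p / m ! := by
  have hterm : ∀ a ∈ allelicVectors n m p,
      ∏ j, (θ / (j.val + 1)) ^ a j / (a j)! = θ ^ p * cycleIndexWeight a := by
    intro a ha
    rw [← (mem_allelicVectors.1 ha).2, ← prod_pow_eq_pow_sum, cycleIndexWeight,
      ← prod_mul_distrib]
    exact prod_congr rfl fun j _ => by rw [div_pow, div_div, div_eq_mul_inv]
  rw [sum_congr rfl hterm, ← mul_sum, ← cycleIndexSum, ← cycleIndexSum_mul_factorial hm,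
    mul_div_assoc, mul_div_cancel_right₀ _ (by positivity)]

end CycleIndex

def allelicMatrices (k n : ℕ) (p : Fin k → ℕ) : Finset (Fin k → Fin n → ℕ) :=
  (antidiagonalTuple k n).biUnion fun m => Fintype.piFinset fun l => allelicVectors n (m l) (p l)

section AllelicMatrices

variable {k n : ℕ} {p : Fin k → ℕ}

theorem mem_allelicMatrices {a : Fin k → Fin n → ℕ} :
    a ∈ allelicMatrices k n p ↔
      (∑ l, ∑ j : Fin n, (j.val + 1) * a l j = n) ∧ ∀ l, ∑ j, a l j = p l := by
  simp only [allelicMatrices, mem_biUnion, Fintype.mem_piFinset, mem_allelicVectors,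
    Nat.mem_antidiagonalTuple]
  constructor
  · rintro ⟨m, hm, ha⟩
    exact ⟨by simp only [fun l => (ha l).1, hm], fun l => (ha l).2⟩
  · rintro ⟨hn, hp⟩
    exact ⟨fun l => ∑ j : Fin n, (j.val + 1) * a l j, hn, fun l => ⟨rfl, hp l⟩⟩

theorem tsum_prod_allelicMatrices (f : Fin k → (Fin n → ℕ) → ℝ) :
    ∑' a : {a : Fin k → Fin n → ℕ //
        (∑ l, ∑ j : Fin n, (j.val + 1) * a l j = n) ∧ ∀ l, ∑ j, a l j = p l},
      ∏ l, f l (a.1 l) =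
      ∑ m ∈ antidiagonalTuple k n, ∏ l, ∑ x ∈ allelicVectors n (m l) (p l), f l x := by
  rw [← (Equiv.subtypeEquivRight fun _ => mem_allelicMatrices).tsum_eq]
  simp only [Equiv.subtypeEquivRight_apply_coe]
  rw [Finset.tsum_subtype (allelicMatrices k n p) fun a => ∏ l, f l (a l), allelicMatrices,
    sum_biUnion]
  · simp_rw [prod_univ_sum]
  · intro m _ m' _ hne
    refine disjoint_left.2 fun a ha ha' => hne (funext fun l => ?_)
    rw [Fintype.mem_piFinset] at ha ha'
    rw [← (mem_allelicVectors.1 (ha l)).1, (mem_allelicVectors.1 (ha' l)).1]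

end AllelicMatrices

theorem joint_distribution_allele_numbers_general (k n : ℕ)
    (θ : Fin k → ℝ) (p : Fin k → ℕ) :
    ∑' a : {a : Fin k → Fin n → ℕ //
        (∑ l, ∑ j : Fin n, (j.val + 1) * a l j = n) ∧ ∀ l, ∑ j, a l j = p l},
      (n ! : ℝ) / (ascPochhammer ℝ n).eval (∑ l, θ l) *
        ∏ l, ∏ j : Fin n, (θ l / (j.val + 1)) ^ (a.1 l j) / ((a.1 l j)! : ℝ) =
      (n ! : ℝ) * (∏ l, θ l ^ p l) / (ascPochhammer ℝ n).eval (∑ l, θ l) *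
        ∑ m ∈ Finset.Nat.antidiagonalTuple k n,
          (∏ l, (_root_.stirlingFirst (m l) (p l) : ℝ)) / ∏ l, ((m l)! : ℝ) := by
  rw [tsum_mul_left,
    tsum_prod_allelicMatrices fun l x => ∏ j : Fin n, (θ l / (j.val + 1)) ^ x j / ((x j)! : ℝ),
    mul_sum, mul_sum]
  refine sum_congr rfl fun m hm => ?_
  have hmn : ∀ l, m l ≤ n := fun l => (Nat.mem_antidiagonalTuple.1 hm) ▸
    single_le_sum (f := m) (fun _ _ => Nat.zero_le _) (mem_univ l)
  simp_rw [sum_prod_allelicVectors _ (hmn _), stirlingFirst_eq_nat_stirlingFirst,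
    prod_div_distrib, prod_mul_distrib]
  ring

/-- Joint distribution of the numbers `K_n^{(l)}` of alleles of each class under the
refined Ewens sampling formula:
`P(K_n^{(1)}=p₁,…,K_n^{(k)}=p_k) = (n! θ₁^{p₁}⋯θ_k^{p_k}/(θ₁+…+θ_k)_n) ·
  Σ_{n₁+…+n_k=n} Π_l [n_l, p_l]/n_l!`. -/
theorem joint_distribution_allele_numbers (k n : ℕ) (hn : 0 < n)
    (θ : Fin k → ℝ) (hθ : ∀ l, 0 < θ l) (p : Fin k → ℕ) :
    ∑' a : {a : Fin k → Fin n → ℕ //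
        (∑ l, ∑ j : Fin n, (j.val + 1) * a l j = n) ∧ ∀ l, ∑ j, a l j = p l},
      (n ! : ℝ) / (ascPochhammer ℝ n).eval (∑ l, θ l) *
        ∏ l, ∏ j : Fin n, (θ l / (j.val + 1)) ^ (a.1 l j) / ((a.1 l j)! : ℝ) =
      (n ! : ℝ) * (∏ l, θ l ^ p l) / (ascPochhammer ℝ n).eval (∑ l, θ l) *
        ∑ m ∈ Finset.Nat.antidiagonalTuple k n,
          (∏ l, (_root_.stirlingFirst (m l) (p l) : ℝ)) / ∏ l, ((m l)! : ℝ) :=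
  joint_distribution_allele_numbers_general k n θ p
end
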